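/- arXiv:2212.08260 — 2 statements merged into one kernel-verified Lean document; each statement's English description precedes it below -/
import Mathlib

section
/- Let E be a real Hilbert space, let κ ∈ (0,1), α ≥ 0, B ≥ 0 and k ∈ ℕ. Let T : E → E be κ-Lipschitz with T z★ = z★, let P : E → E be nonexpansive (1-Lipschitz) with P z★ = x★, and set S = P ∘ T^[k] (the k-fold iterate of T followed by P). Let f : E → ℝ be differentiable with α-Lipschitz gradient. Then for all z, w ∈ E with ‖z − z★‖ ≤ B and ‖w − z★‖ ≤ B, one has |f(S z) − f(S w)| ≤ κ^k (‖∇f(x★)‖ + α κ^k B) ‖z − w‖. -/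
/-! The map `S = P ∘ T^[k]` is `κ^k`-Lipschitz and sends `z₀` to `x₀`, so it maps the ball of
radius `B` around `z₀` into the ball of radius `κ^k B` around `x₀`. On that ball
`‖∇f‖ ≤ ‖∇f x₀‖ + α κ^k B`, which by the mean value inequality is a Lipschitz constant of `f`
there; composing the two Lipschitz bounds gives the claim. -/

open scoped NNReal
open Metric

section

variable {E : Type*} [NormedAddCommGroup E] [InnerProductSpace ℝ E] [CompleteSpace E]

theorem norm_fderiv_eq_norm_gradient (f : E → ℝ) (x : E) : ‖fderiv ℝ f x‖ = ‖gradient f x‖ := by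
  simp only [gradient, LinearIsometryEquiv.norm_map]

theorem norm_fderiv_le_of_lipschitzWith_gradient {f : E → ℝ} {α : ℝ≥0}
    (hgrad : LipschitzWith α (gradient f)) {x₀ x : E} {r : ℝ} (hx : x ∈ closedBall x₀ r) :
    ‖fderiv ℝ f x‖ ≤ ‖gradient f x₀‖ + α * r :=
  calc ‖fderiv ℝ f x‖ = ‖gradient f x₀ + (gradient f x - gradient f x₀)‖ := by
        rw [norm_fderiv_eq_norm_gradient, add_sub_cancel]
    _ ≤ ‖gradient f x₀‖ + ‖gradient f x - gradient f x₀‖ := norm_add_le _ _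
    _ ≤ ‖gradient f x₀‖ + α * r := by
        gcongr
        rw [← dist_eq_norm]
        exact (hgrad.dist_le_mul x x₀).trans (by gcongr; exact mem_closedBall.mp hx)

theorem abs_sub_le_of_lipschitzWith_gradient {f : E → ℝ} (hf : Differentiable ℝ f) {α : ℝ≥0}
    (hgrad : LipschitzWith α (gradient f)) {x₀ u v : E} {r : ℝ}
    (hu : u ∈ closedBall x₀ r) (hv : v ∈ closedBall x₀ r) :
    |f u - f v| ≤ (‖gradient f x₀‖ + α * r) * ‖u - v‖ := by
  rw [← Real.norm_eq_abs]
  exact Convex.norm_image_sub_le_of_norm_fderiv_le (fun x _ ↦ hf x)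
    (fun _ hx ↦ norm_fderiv_le_of_lipschitzWith_gradient hgrad hx) (convex_closedBall x₀ r) hv hu

theorem abs_sub_comp_le_of_lipschitzWith_gradient {S : E → E} {K : ℝ≥0} (hS : LipschitzWith K S)
    {z₀ x₀ : E} (hSz : S z₀ = x₀) {f : E → ℝ} (hf : Differentiable ℝ f) {α : ℝ≥0}
    (hgrad : LipschitzWith α (gradient f)) {B : ℝ} {z w : E}
    (hz : z ∈ closedBall z₀ B) (hw : w ∈ closedBall z₀ B) :
    |f (S z) - f (S w)| ≤ K * (‖gradient f x₀‖ + α * K * B) * ‖z - w‖ := by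
  have hball := hSz ▸ hS.mapsTo_closedBall z₀ B
  calc |f (S z) - f (S w)|
      ≤ (‖gradient f x₀‖ + α * (K * B)) * ‖S z - S w‖ :=
        abs_sub_le_of_lipschitzWith_gradient hf hgrad (hball hz) (hball hw)
    _ ≤ (‖gradient f x₀‖ + α * (K * B)) * (K * ‖z - w‖) := by
        have hB : 0 ≤ B := dist_nonneg.trans (mem_closedBall.mp hz)
        gcongr
        simpa only [dist_eq_norm] using hS.dist_le_mul z w
    _ = K * (‖gradient f x₀‖ + α * K * B) * ‖z - w‖ := by ring

end

theorem stmt_0_general {E : Type*} [NormedAddCommGroup E] [InnerProductSpace ℝ E] [CompleteSpace E]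
    (κ : ℝ≥0) (α : ℝ≥0) (B : ℝ) (k : ℕ)
    (T P : E → E) (z₀ x₀ : E)
    (hT : LipschitzWith κ T) (hTfix : T z₀ = z₀)
    (hP : LipschitzWith 1 P) (hPz : P z₀ = x₀)
    (f : E → ℝ) (hf : Differentiable ℝ f) (hgrad : LipschitzWith α (gradient f))
    (z w : E) (hz : ‖z - z₀‖ ≤ B) (hw : ‖w - z₀‖ ≤ B) :
    |f (P (T^[k] z)) - f (P (T^[k] w))| ≤
      (κ : ℝ) ^ k * (‖gradient f x₀‖ + (α : ℝ) * (κ : ℝ) ^ k * B) * ‖z - w‖ := by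
  have hS : LipschitzWith (κ ^ k) (P ∘ T^[k]) := by
    simpa only [one_mul] using hP.comp (hT.iterate k)
  have hSz : (P ∘ T^[k]) z₀ = x₀ := by
    rw [Function.comp_apply, Function.iterate_fixed hTfix, hPz]
  simpa only [Function.comp_apply, NNReal.coe_pow] using
    abs_sub_comp_le_of_lipschitzWith_gradient hS hSz hf hgrad
      (mem_closedBall_iff_norm.mpr hz) (mem_closedBall_iff_norm.mpr hw)

/-- Lipschitz constant of the loss `L⁰ ∘ 𝒜^k` in the convex case. -/
theorem stmt_0 {E : Type*} [NormedAddCommGroup E] [InnerProductSpace ℝ E] [CompleteSpace E]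
    (κ : ℝ≥0) (hκ0 : 0 < κ) (hκ1 : κ < 1) (α : ℝ≥0) (B : ℝ) (hB : 0 ≤ B) (k : ℕ)
    (T P : E → E) (z₀ x₀ : E)
    (hT : LipschitzWith κ T) (hTfix : T z₀ = z₀)
    (hP : LipschitzWith 1 P) (hPz : P z₀ = x₀)
    (f : E → ℝ) (hf : Differentiable ℝ f) (hgrad : LipschitzWith α (gradient f))
    (z w : E) (hz : ‖z - z₀‖ ≤ B) (hw : ‖w - z₀‖ ≤ B) :
    |f (P (T^[k] z)) - f (P (T^[k] w))| ≤
      (κ : ℝ) ^ k * (‖gradient f x₀‖ + (α : ℝ) * (κ : ℝ) ^ k * B) * ‖z - w‖ :=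
  stmt_0_general κ α B k T P z₀ x₀ hT hTfix hP hPz f hf hgrad z w hz hw
end

section
/- Let E be a real Hilbert space, ν ∈ (0,1), and let T : E → E be ν-averaged, i.e. T = (1−ν)·id + ν·G for some nonexpansive (1-Lipschitz) map G : E → E. Let z★ be a fixed point of T (T z★ = z★). Then for every z ∈ E and every k ∈ ℕ, ‖T^[k+1] z − T^[k] z‖ ≤ ‖z − z★‖ / √((k+1) ν (1−ν)). -/
/-!
Writing `T = (1 - ν) id + ν G`, the identity
`‖(1 - ν) a + ν b‖² = (1 - ν) ‖a‖² + ν ‖b‖² - ν (1 - ν) ‖a - b‖²` and nonexpansiveness of `G` give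
`‖T x - T y‖² + (1 - ν) / ν ‖(x - T x) - (y - T y)‖² ≤ ‖x - y‖²`.
Taking `y = z₀`, the distance `‖T^[n] z - z₀‖²` drops at step `n` by at least `(1 - ν) / ν` times
the squared residual `‖T^[n + 1] z - T^[n] z‖²`. As `T` is nonexpansive the residuals are
nonincreasing, so summing the first `k + 1` drops bounds `(k + 1) (1 - ν) / ν` times the `k`-th
squared residual by `‖z - z₀‖²`; finally `ν (1 - ν) ≤ (1 - ν) / ν`.
-/

open Finset

section Hilbert

variable {E : Type*} [NormedAddCommGroup E] [InnerProductSpace ℝ E]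

theorem norm_one_sub_smul_add_smul_sq (ν : ℝ) (a b : E) :
    ‖(1 - ν) • a + ν • b‖ ^ 2
      = (1 - ν) * ‖a‖ ^ 2 + ν * ‖b‖ ^ 2 - ν * (1 - ν) * ‖a - b‖ ^ 2 := by
  rw [norm_add_sq_real, norm_sub_sq_real, real_inner_smul_left, real_inner_smul_right,
    norm_smul, norm_smul, mul_pow, mul_pow, Real.norm_eq_abs, Real.norm_eq_abs, sq_abs, sq_abs]
  ring

theorem norm_sub_sq_add_le_of_averaged {ν : ℝ} (hν0 : 0 < ν) {T G : E → E}
    (hG : LipschitzWith 1 G) (hTG : ∀ x, T x = (1 - ν) • x + ν • G x) (x y : E) :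
    ‖T x - T y‖ ^ 2 + (1 - ν) / ν * ‖(x - T x) - (y - T y)‖ ^ 2 ≤ ‖x - y‖ ^ 2 := by
  have hTxy : T x - T y = (1 - ν) • (x - y) + ν • (G x - G y) := by
    simp only [hTG, smul_sub]; abel
  have hres : (x - T x) - (y - T y) = ν • ((x - y) - (G x - G y)) := by
    simp only [hTG, smul_sub, sub_smul, one_smul]; abel
  have hGxy : ‖G x - G y‖ ≤ ‖x - y‖ := by
    simpa [dist_eq_norm] using hG.dist_le_mul x y
  have hcoef : (1 - ν) / ν * ν ^ 2 = ν * (1 - ν) := by field_simp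
  rw [hTxy, hres, norm_one_sub_smul_add_smul_sq, norm_smul, Real.norm_eq_abs, abs_of_pos hν0,
    mul_pow, ← mul_assoc, hcoef]
  nlinarith [pow_le_pow_left₀ (norm_nonneg _) hGxy 2]

theorem lipschitzWith_one_of_averaged {ν : ℝ} (hν0 : 0 < ν) (hν1 : ν ≤ 1) {T G : E → E}
    (hG : LipschitzWith 1 G) (hTG : ∀ x, T x = (1 - ν) • x + ν • G x) : LipschitzWith 1 T := by
  refine LipschitzWith.of_dist_le_mul fun x y => ?_
  rw [NNReal.coe_one, one_mul, dist_eq_norm, dist_eq_norm,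
    ← sq_le_sq₀ (norm_nonneg _) (norm_nonneg _)]
  have hfirm := norm_sub_sq_add_le_of_averaged hν0 hG hTG x y
  have hcoef : 0 ≤ (1 - ν) / ν := div_nonneg (by linarith) hν0.le
  nlinarith [sq_nonneg ‖(x - T x) - (y - T y)‖]

end Hilbert

theorem antitone_norm_iterate_succ_sub_iterate {E : Type*} [SeminormedAddCommGroup E]
    {T : E → E} (hT : LipschitzWith 1 T) (z : E) :
    Antitone fun n => ‖T^[n + 1] z - T^[n] z‖ := by
  refine antitone_nat_of_succ_le fun n => ?_
  simpa [dist_eq_norm, Function.iterate_succ_apply'] using hT.dist_le_mul (T^[n + 1] z) (T^[n] z)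

theorem succ_mul_le_of_antitone_of_add_le {d r : ℕ → ℝ} (hd : ∀ n, 0 ≤ d n) (hr : Antitone r)
    (hdr : ∀ n, d (n + 1) + r n ≤ d n) (k : ℕ) : (k + 1) * r k ≤ d 0 := by
  calc (k + 1) * r k = ∑ _i ∈ range (k + 1), r k := by simp
    _ ≤ ∑ i ∈ range (k + 1), r i :=
        sum_le_sum fun i hi => hr (Nat.lt_succ_iff.mp (mem_range.mp hi))
    _ ≤ ∑ i ∈ range (k + 1), (d i - d (i + 1)) := sum_le_sum fun i _ => by linarith [hdr i]
    _ = d 0 - d (k + 1) := sum_range_sub' d (k + 1)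
    _ ≤ d 0 := sub_le_self _ (hd _)

theorem le_div_sqrt_of_sq_mul_le {a b c : ℝ} (hb : 0 ≤ b) (hc : 0 < c) (h : a ^ 2 * c ≤ b ^ 2) :
    a ≤ b / √c := by
  rw [le_div_iff₀ (Real.sqrt_pos.mpr hc)]
  refine (le_abs_self _).trans (abs_le_of_sq_le_sq ?_ hb)
  rwa [mul_pow, Real.sq_sqrt hc.le]

theorem stmt_4_general {E : Type*} [NormedAddCommGroup E] [InnerProductSpace ℝ E]
    (ν : ℝ) (hν0 : 0 < ν) (hν1 : ν < 1) (T G : E → E)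
    (hG : LipschitzWith 1 G) (hTG : ∀ x, T x = (1 - ν) • x + ν • G x)
    (z₀ : E) (hfix : T z₀ = z₀) (z : E) (k : ℕ) :
    ‖T^[k + 1] z - T^[k] z‖ ≤ ‖z - z₀‖ / Real.sqrt ((k + 1 : ℝ) * ν * (1 - ν)) := by
  set c := (1 - ν) / ν
  have hc : ν * (1 - ν) ≤ c := by
    rw [le_div_iff₀ hν0]
    nlinarith [mul_le_mul_of_nonneg_left (mul_le_one₀ hν1.le hν0.le hν1.le) (sub_pos.mpr hν1).le]
  have hstep (n : ℕ) : ‖T^[n + 1] z - z₀‖ ^ 2 + c * ‖T^[n + 1] z - T^[n] z‖ ^ 2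
      ≤ ‖T^[n] z - z₀‖ ^ 2 := by
    have h := norm_sub_sq_add_le_of_averaged hν0 hG hTG (T^[n] z) z₀
    rwa [hfix, sub_self, sub_zero, norm_sub_rev (T^[n] z),
      ← Function.iterate_succ_apply' T n] at h
  have hres := antitone_norm_iterate_succ_sub_iterate
    (lipschitzWith_one_of_averaged hν0 hν1.le hG hTG) z
  have hsum := succ_mul_le_of_antitone_of_add_le (fun n => sq_nonneg ‖T^[n] z - z₀‖)
    (fun m n hmn => by gcongr; exact hres hmn) hstep k
  refine le_div_sqrt_of_sq_mul_le (norm_nonneg _) (by positivity) ?_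
  simp only [Function.iterate_zero_apply] at hsum
  nlinarith [mul_le_mul_of_nonneg_left hc
    (by positivity : 0 ≤ ((k : ℝ) + 1) * ‖T^[k + 1] z - T^[k] z‖ ^ 2)]

/-- `O(1/√k)` fixed-point-residual rate for the iteration of a ν-averaged
operator. -/
theorem stmt_4 {E : Type*} [NormedAddCommGroup E] [InnerProductSpace ℝ E] [CompleteSpace E]
    (ν : ℝ) (hν0 : 0 < ν) (hν1 : ν < 1) (T G : E → E)
    (hG : LipschitzWith 1 G) (hTG : ∀ x, T x = (1 - ν) • x + ν • G x)
    (z₀ : E) (hfix : T z₀ = z₀) (z : E) (k : ℕ) :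
    ‖T^[k + 1] z - T^[k] z‖ ≤ ‖z - z₀‖ / Real.sqrt ((k + 1 : ℝ) * ν * (1 - ν)) :=
  stmt_4_general ν hν0 hν1 T G hG hTG z₀ hfix z k
end
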